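/- If label ℓ_b is dominated by label ℓ_a (same start s, same end node, c̄(ℓ_a) ≤ c̄(ℓ_b), t(ℓ_a) ≤ t(ℓ_b), N(ℓ_a) ⊆ N(ℓ_b)), and ℓ_b can be merged with a forward label ℓ_f (i.e., N(ℓ_f) ∩ N(ℓ_b) = {v}) to form a length-feasible cycle, then ℓ_a can also be merged with ℓ_f, the resulting cycle is length-feasible, and its reduced cost is at most that of the cycle from ℓ_f‖ℓ_b. -/

import Mathlib

/-!
Replacing `ℓ_b` by the dominating `ℓ_a` shrinks the node set, so the intersection with
`N(ℓ_f)` stays inside `{v}` (and still contains `v`, the common end node) and the minimum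
critical time `q` can only grow; `t` and `c̄` enter the merge additively, so they can only
decrease.
-/

/-- A label `(N, v, c̄, t, q)` representing a partial cycle (path) from a fixed start node. -/
structure Label (V : Type) where
  N : Finset V
  v : V
  c : ℝ
  t : ℝ
  q : ℝ

variable {V : Type} [DecidableEq V]

/-- The merged label `ℓ_f‖ℓ_b` of two labels from `s` ending at the same node. -/
def mergeLabel (π : V → ℝ) (s : V) (ℓf ℓb : Label V) : Label V :=
  ⟨ℓf.N ∪ ℓb.N ∪ {s}, s, ℓf.c + ℓb.c - π s + π ℓf.v - 1,
    ℓf.t + ℓb.t, min ℓf.q ℓb.q⟩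

theorem Finset.inter_eq_singleton_of_subset {α : Type*} [DecidableEq α] {s t u : Finset α}
    {a : α} (h : s ∩ t = {a}) (hut : u ⊆ t) (ha : a ∈ u) : s ∩ u = {a} := by
  have has : a ∈ s := (Finset.mem_inter.mp (h ▸ Finset.mem_singleton_self a)).1
  refine Finset.Subset.antisymm ?_ ?_
  · exact h ▸ Finset.inter_subset_inter_left hut
  · exact Finset.singleton_subset_iff.mpr (Finset.mem_inter.mpr ⟨has, ha⟩)

section Merge

variable (π : V → ℝ) (s : V) (ℓf : Label V)

theorem mergeLabel_t_le_q_of_le_right {ℓa ℓb : Label V} (ht : ℓa.t ≤ ℓb.t) (hq : ℓb.q ≤ ℓa.q)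
    (hfeas : (mergeLabel π s ℓf ℓb).t ≤ (mergeLabel π s ℓf ℓb).q) :
    (mergeLabel π s ℓf ℓa).t ≤ (mergeLabel π s ℓf ℓa).q :=
  calc ℓf.t + ℓa.t ≤ ℓf.t + ℓb.t := by gcongr
    _ ≤ min ℓf.q ℓb.q := hfeas
    _ ≤ min ℓf.q ℓa.q := min_le_min_left _ hq

theorem mergeLabel_c_le_of_le_right {ℓa ℓb : Label V} (hc : ℓa.c ≤ ℓb.c) :
    (mergeLabel π s ℓf ℓa).c ≤ (mergeLabel π s ℓf ℓb).c := by
  simp only [mergeLabel]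
  linarith

end Merge

theorem dominated_label_replaceable_in_merge_general
    (qn π : V → ℝ) (s : V)
    (ℓf ℓa ℓb : Label V)
    -- the q-components record the minimum critical time over visited nodes incl. `s`
    (hqa : ℓa.q = (insert s ℓa.N).inf' (Finset.insert_nonempty _ _) qn)
    (hqb : ℓb.q = (insert s ℓb.N).inf' (Finset.insert_nonempty _ _) qn)
    -- the (non-initial) label `ℓ_a` contains its end node
    (hva : ℓa.v ∈ ℓa.N)
    -- `ℓ_a` dominates `ℓ_b`
    (hv : ℓa.v = ℓb.v) (hc : ℓa.c ≤ ℓb.c) (ht : ℓa.t ≤ ℓb.t) (hN : ℓa.N ⊆ ℓb.N)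
    -- `ℓ_f` and `ℓ_b` can be merged, and the merged cycle is length-feasible
    (hvf : ℓf.v = ℓb.v)
    (hmerge : ℓf.N ∩ ℓb.N = {ℓf.v})
    (hfeas : (mergeLabel π s ℓf ℓb).t ≤ (mergeLabel π s ℓf ℓb).q) :
    ℓf.N ∩ ℓa.N = {ℓf.v} ∧
    (mergeLabel π s ℓf ℓa).t ≤ (mergeLabel π s ℓf ℓa).q ∧
    (mergeLabel π s ℓf ℓa).c ≤ (mergeLabel π s ℓf ℓb).c := by
  have hq : ℓb.q ≤ ℓa.q := by
    rw [hqa, hqb]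
    exact Finset.inf'_mono qn (Finset.insert_subset_insert s hN) _
  refine ⟨Finset.inter_eq_singleton_of_subset hmerge hN (hvf ▸ hv ▸ hva), ?_, ?_⟩
  · exact mergeLabel_t_le_q_of_le_right π s ℓf ht hq hfeas
  · exact mergeLabel_c_le_of_le_right π s ℓf hc

/-- if `ℓ_b` is dominated by `ℓ_a` (same start `s`, same end node,
`c̄(ℓ_a) ≤ c̄(ℓ_b)`, `t(ℓ_a) ≤ t(ℓ_b)`, `N(ℓ_a) ⊆ N(ℓ_b)`) and `ℓ_b` can be merged with
a forward label `ℓ_f` (`N(ℓ_f) ∩ N(ℓ_b) = {v}`) into a length-feasible cycle, then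
`ℓ_a` can also be merged with `ℓ_f`, the resulting cycle is length-feasible, and its
reduced cost is at most that of `ℓ_f‖ℓ_b`. -/
theorem dominated_label_replaceable_in_merge
    (te : V → V → ℝ) (qn π : V → ℝ) (hqn : ∀ i, 0 < qn i) (s : V)
    (ℓf ℓa ℓb : Label V)
    -- the q-components record the minimum critical time over visited nodes incl. `s`
    (hqf : ℓf.q = (insert s ℓf.N).inf' (Finset.insert_nonempty _ _) qn)
    (hqa : ℓa.q = (insert s ℓa.N).inf' (Finset.insert_nonempty _ _) qn)
    (hqb : ℓb.q = (insert s ℓb.N).inf' (Finset.insert_nonempty _ _) qn)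
    -- the (non-initial) label `ℓ_a` contains its end node
    (hva : ℓa.v ∈ ℓa.N)
    -- `ℓ_a` dominates `ℓ_b`
    (hv : ℓa.v = ℓb.v) (hc : ℓa.c ≤ ℓb.c) (ht : ℓa.t ≤ ℓb.t) (hN : ℓa.N ⊆ ℓb.N)
    -- `ℓ_f` and `ℓ_b` can be merged, and the merged cycle is length-feasible
    (hvf : ℓf.v = ℓb.v)
    (hmerge : ℓf.N ∩ ℓb.N = {ℓf.v})
    (hfeas : (mergeLabel π s ℓf ℓb).t ≤ (mergeLabel π s ℓf ℓb).q) :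
    ℓf.N ∩ ℓa.N = {ℓf.v} ∧
    (mergeLabel π s ℓf ℓa).t ≤ (mergeLabel π s ℓf ℓa).q ∧
    (mergeLabel π s ℓf ℓa).c ≤ (mergeLabel π s ℓf ℓb).c :=
  dominated_label_replaceable_in_merge_general qn π s ℓf ℓa ℓb hqa hqb hva hv hc ht hN hvf hmerge
    hfeas
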